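/- Let B : ℝ → ℝ be uniformly Lipschitz with constant L_B, let A satisfy Assumption A, and suppose κ₁ − L_B c_j² > 0. Define the iteration: given u^{(n)} ∈ V, let u^{(n+1)} ∈ V be the unique solution of ∫_Ω A ∇u^{(n+1)}·∇v = ⟨f,v⟩ + ∫_{Γ_N} g v − ∫_{Γ_C} B(u^{(n)}) v for all v ∈ V. Then the map u^{(n)} ↦ u^{(n+1)} is a contraction on V, and consequently the iterates u^{(n)} converge linearly (at a geometric rate) in V to the solution u of the variational problem ∫_Ω A∇u·∇v + ∫_{Γ_C} B(u)v = ⟨f,v⟩ + ∫_{Γ_N} g v for all v ∈ V. -/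

import Mathlib

open MeasureTheory Filter Topology Metric
open scoped ENNReal NNReal BigOperators

noncomputable section

/-- Points of `ℝ^d`. -/
abbrev Pt (d : ℕ) := Fin d → ℝ
/-- Scalar functions on `ℝ^d`. -/
abbrev Fn (d : ℕ) := Pt d → ℝ
/-- Vector fields (e.g. gradients) on `ℝ^d`. -/
abbrev VFn (d : ℕ) := Pt d → Pt d
/-- Matrix-valued coefficient functions on `ℝ^d`. -/
abbrev Mat (d : ℕ) := Pt d → Fin d → Fin d → ℝ

/-- The codimension-one (surface) Hausdorff measure on `ℝ^d`, used for boundary integrals. -/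
def sMeasure (d : ℕ) : Measure (Pt d) := Measure.hausdorffMeasure ((d : ℝ) - 1)

/-- `f` is 1-periodic. -/
def ZPeriodic {d : ℕ} {α : Type*} (f : Pt d → α) : Prop :=
  ∀ (x : Pt d) (z : Fin d → ℤ), f (x + fun i => (z i : ℝ)) = f x

/-- The representative cell `Q = (-1/2, 1/2)^d`. -/
def unitCell (d : ℕ) : Set (Pt d) := Set.pi Set.univ fun _ => Set.Ioo (-(1/2) : ℝ) (1/2)

/-- `du` is the weak gradient of `u` on the open set `Ω`. -/
def IsWeakGradOn {d : ℕ} (Ω : Set (Pt d)) (u : Fn d) (du : VFn d) : Prop :=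
  ∀ φ : Fn d, ContDiff ℝ (⊤ : ℕ∞) φ → HasCompactSupport φ → tsupport φ ⊆ Ω →
    ∀ i, ∫ x in Ω, u x * fderiv ℝ φ x (Pi.single i 1) = - ∫ x in Ω, du x i * φ x

/-- Membership in `H¹(Ω)` with given weak gradient `du`. -/
def MemH1 {d : ℕ} (Ω : Set (Pt d)) (u : Fn d) (du : VFn d) : Prop :=
  MemLp u 2 (volume.restrict Ω) ∧ (∀ i, MemLp (fun x => du x i) 2 (volume.restrict Ω)) ∧
    IsWeakGradOn Ω u du

/-- Membership in `H²(Ω)` with weak gradient `du` and weak Hessian `d2u`. -/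
def MemH2 {d : ℕ} (Ω : Set (Pt d)) (u : Fn d) (du : VFn d)
    (d2u : Pt d → Fin d → Pt d) : Prop :=
  MemH1 Ω u du ∧ ∀ l, MemH1 Ω (fun x => du x l) (fun x => d2u x l)

/-- `L²` norm of `u` on `s` with respect to the measure `μ`. -/
def L2NormOn {d : ℕ} (s : Set (Pt d)) (μ : Measure (Pt d)) (u : Fn d) : ℝ :=
  Real.sqrt (∫ x in s, (u x) ^ 2 ∂μ)

/-- `L²(s)` norm of a gradient field (with respect to Lebesgue measure). -/
def GradL2NormOn {d : ℕ} (s : Set (Pt d)) (du : VFn d) : ℝ :=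
  Real.sqrt (∫ x in s, ∑ i, (du x i) ^ 2)

/-- Squared `H¹(Ω)` norm. -/
def H1NormSq {d : ℕ} (Ω : Set (Pt d)) (u : Fn d) (du : VFn d) : ℝ :=
  (∫ x in Ω, (u x) ^ 2) + ∫ x in Ω, ∑ i, (du x i) ^ 2

/-- `H²(Ω)` norm of `u` with weak derivatives `du`, `d2u`. -/
def H2Norm {d : ℕ} (Ω : Set (Pt d)) (u : Fn d) (du : VFn d)
    (d2u : Pt d → Fin d → Pt d) : ℝ :=
  Real.sqrt ((∫ x in Ω, (u x) ^ 2) + (∫ x in Ω, ∑ i, (du x i) ^ 2)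
    + ∫ x in Ω, ∑ l, ∑ i, (d2u x l i) ^ 2)

/-- Assumption A: `A` is measurable, symmetric and uniformly elliptic with constants κ₁, κ₂. -/
def IsElliptic {d : ℕ} (A : Mat d) (κ₁ κ₂ : ℝ) : Prop :=
  (∀ i j, Measurable fun y => A y i j) ∧
    ∀ᵐ y : Pt d, (∀ i j, A y i j = A y j i) ∧
      ∀ ξ : Pt d, κ₁ * ∑ i, (ξ i) ^ 2 ≤ (∑ i, ∑ j, A y i j * ξ i * ξ j) ∧
        (∑ i, ∑ j, A y i j * ξ i * ξ j) ≤ κ₂ * ∑ i, (ξ i) ^ 2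

/-- The matrix `A` is 1-periodic. -/
def MatPeriodic {d : ℕ} (A : Mat d) : Prop := ∀ i j, ZPeriodic fun y => A y i j

/-- `A^ε(x) = A(x/ε)`. -/
def scaleMat {d : ℕ} (A : Mat d) (ε : ℝ) : Mat d := fun x => A (ε⁻¹ • x)

/-- `N l`, with weak gradient `dN l`, is the family of correctors for `A`:
1-periodic, mean-zero on the cell, solving the cell problem in the weak periodic sense. -/
def IsCorrector {d : ℕ} (A : Mat d) (N : Fin d → Fn d) (dN : Fin d → VFn d) : Prop :=
  ∀ l, ZPeriodic (N l) ∧ ZPeriodic (dN l) ∧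
    IsWeakGradOn Set.univ (N l) (dN l) ∧
    MemH1 (unitCell d) (N l) (dN l) ∧
    (∫ y in unitCell d, N l y) = 0 ∧
    ∀ φ : Fn d, ContDiff ℝ (⊤ : ℕ∞) φ → ZPeriodic φ →
      (∫ y in unitCell d, ∑ i, ∑ j, A y i j * dN l y j * fderiv ℝ φ y (Pi.single i 1))
        = - ∫ y in unitCell d, ∑ i, A y i l * fderiv ℝ φ y (Pi.single i 1)

/-- Homogenized coefficients `Â_{il} = ⨍_Q (A_{il} + A_{ij} ∂_j N_l)`. -/
def hatA {d : ℕ} (A : Mat d) (dN : Fin d → VFn d) (i l : Fin d) : ℝ :=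
  ∫ y in unitCell d, (A y i l + ∑ j, A y i j * dN l y j)

/-- A smooth convolution kernel supported in `B_{1/2}(0)`. -/
def IsMollifier {d : ℕ} (φ : Fn d) : Prop :=
  ContDiff ℝ (⊤ : ℕ∞) φ ∧ HasCompactSupport φ ∧ tsupport φ ⊆ Metric.ball 0 (1/2) ∧
    (∀ x, 0 ≤ φ x) ∧ (∫ x, φ x) = 1

/-- The smoothing operator `S_ε u = φ_ε ∗ u`, `φ_ε(x) = ε^{-d} φ(x/ε)`. -/
def smoothOp {d : ℕ} (φ : Fn d) (ε : ℝ) (u : Fn d) : Fn d :=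
  fun x => ∫ y, (ε ^ d)⁻¹ * φ (ε⁻¹ • y) * u (x - y)

/-- Clarke generalized directional derivative of `j` at `x` in direction `h`. -/
def clarkeDeriv {X : Type*} [NormedAddCommGroup X] [NormedSpace ℝ X]
    (j : X → ℝ) (x h : X) : ℝ :=
  limsup (fun p : X × ℝ => (j (p.1 + p.2 • h) - j p.1) / p.2)
    ((nhds x) ×ˢ (nhdsWithin 0 (Set.Ioi 0)))

/-- Clarke generalized subdifferential of `j` at `x`. -/
def clarkeSubdiff {X : Type*} [NormedAddCommGroup X] [NormedSpace ℝ X]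
    (j : X → ℝ) (x : X) : Set (X →L[ℝ] ℝ) :=
  {xs | ∀ h, xs h ≤ clarkeDeriv j x h}

/-- `u` is (σ-a.e. on `∂Ω`) the limit of its interior averages: `u` is a trace
representative of itself on the boundary. -/
def IsTraceRep {d : ℕ} (Ω : Set (Pt d)) (u : Fn d) : Prop :=
  ∀ᵐ x ∂(sMeasure d).restrict (frontier Ω),
    Tendsto (fun r => ⨍ y in Metric.ball x r ∩ Ω, u y) (nhdsWithin 0 (Set.Ioi 0)) (nhds (u x))

/-- Membership in `H¹(Ω)` together with an `L²` trace on the boundary. -/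
structure MemH1T {d : ℕ} (Ω : Set (Pt d)) (u : Fn d) (du : VFn d) : Prop where
  h1 : MemH1 Ω u du
  tr : IsTraceRep Ω u
  memB : MemLp u 2 ((sMeasure d).restrict (frontier Ω))

/-- Membership in `V = {v ∈ H¹(Ω) : v = 0 on Γ_D}` (with `L²` traces on `Γ_N`, `Γ_C`). -/
structure MemV {d : ℕ} (Ω ΓD ΓN ΓC : Set (Pt d)) (u : Fn d) (du : VFn d) : Prop where
  h1 : MemH1 Ω u du
  tr : IsTraceRep Ω u
  zeroD : u =ᵐ[(sMeasure d).restrict ΓD] (fun _ => 0)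
  memN : MemLp u 2 ((sMeasure d).restrict ΓN)
  memC : MemLp u 2 ((sMeasure d).restrict ΓC)

/-- The decomposition `Γ = Γ̄_D ∪ Γ̄_N ∪ Γ̄_C` into relatively open pairwise disjoint pieces,
with `Γ_D ≠ ∅` and `Γ_C ≠ ∅`. -/
structure BoundaryDecomp {d : ℕ} (Ω ΓD ΓN ΓC : Set (Pt d)) : Prop where
  hD : ∃ U, IsOpen U ∧ ΓD = U ∩ frontier Ω
  hN : ∃ U, IsOpen U ∧ ΓN = U ∩ frontier Ω
  hC : ∃ U, IsOpen U ∧ ΓC = U ∩ frontier Ω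
  disjDN : Disjoint ΓD ΓN
  disjDC : Disjoint ΓD ΓC
  disjNC : Disjoint ΓN ΓC
  cover : closure ΓD ∪ closure ΓN ∪ closure ΓC = frontier Ω
  neD : ΓD.Nonempty
  neC : ΓC.Nonempty

/-- `Ω` has Lipschitz boundary: near each boundary point, after an orthogonal change of
coordinates, `Ω` is the region above the graph of a Lipschitz function. -/
def HasLipschitzBoundary {d : ℕ} (Ω : Set (Pt d)) : Prop :=
  ∀ p ∈ frontier Ω, ∃ r : ℝ, 0 < r ∧ ∃ i₀ : Fin d, ∃ e : Pt d ≃ₗ[ℝ] Pt d,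
    (∀ x, (∑ i, (e x i) ^ 2) = ∑ i, (x i) ^ 2) ∧
    ∃ ψ : Fn d, ∃ K : NNReal, LipschitzWith K ψ ∧
      (∀ x y : Pt d, (∀ i, i ≠ i₀ → x i = y i) → ψ x = ψ y) ∧
      ∀ x : Pt d, (∑ i, (x i - p i) ^ 2) < r ^ 2 → (x ∈ Ω ↔ ψ (e x) < e x i₀)

/-- `Ω` has `C^{1,1}` boundary: near each boundary point, after an orthogonal change of
coordinates, `Ω` is the region above the graph of a `C^{1,1}` function. -/
def HasC11Boundary {d : ℕ} (Ω : Set (Pt d)) : Prop :=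
  ∀ p ∈ frontier Ω, ∃ r : ℝ, 0 < r ∧ ∃ i₀ : Fin d, ∃ e : Pt d ≃ₗ[ℝ] Pt d,
    (∀ x, (∑ i, (e x i) ^ 2) = ∑ i, (x i) ^ 2) ∧
    ∃ ψ : Fn d, ∃ K K' : NNReal, LipschitzWith K ψ ∧ ContDiff ℝ 1 ψ ∧
      LipschitzWith K' (fun x => fderiv ℝ ψ x) ∧
      (∀ x y : Pt d, (∀ i, i ≠ i₀ → x i = y i) → ψ x = ψ y) ∧
      ∀ x : Pt d, (∑ i, (x i - p i) ^ 2) < r ^ 2 → (x ∈ Ω ↔ ψ (e x) < e x i₀)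

/-- The boundary strip `Ω_t = {x ∈ Ω : dist(x, ∂Ω) < t}`. -/
def boundaryStrip {d : ℕ} (Ω : Set (Pt d)) (t : ℝ) : Set (Pt d) :=
  {x ∈ Ω | Metric.infDist x (frontier Ω) < t}

/-- The hemivariational inequality with diffusion matrix `M`: `u ∈ V` satisfies
`∫_Ω M ∇u·∇v + j⁰(γ_j u; γ_j v) ≥ ⟨f,v⟩ + ∫_{Γ_N} g v` for all `v ∈ V`,
where `⟨f,v⟩ = ∫_Ω (f₀ v + F·∇v)` is a general element of `V*`. -/
def SolvesHVI {d : ℕ} (Ω ΓD ΓN ΓC : Set (Pt d)) (M : Mat d)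
    (j : Lp ℝ 2 ((sMeasure d).restrict ΓC) → ℝ)
    (f0 : Fn d) (F : VFn d) (g : Fn d)
    (u : Fn d) (du : VFn d) (hu : MemV Ω ΓD ΓN ΓC u du) : Prop :=
  ∀ v dv, ∀ hv : MemV Ω ΓD ΓN ΓC v dv,
    (∫ x in Ω, ∑ i, ∑ k, M x i k * du x k * dv x i)
      + clarkeDeriv j (hu.memC.toLp u) (hv.memC.toLp v)
    ≥ (∫ x in Ω, (f0 x * v x + ∑ i, F x i * dv x i))
      + ∫ x in ΓN, g x * v x ∂(sMeasure d)

/-- The Robin problem in variational form on the whole boundary `Γ = ∂Ω`. -/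
def SolvesRobin {d : ℕ} (Ω : Set (Pt d)) (M : Mat d) (α f g : Fn d)
    (u : Fn d) (du : VFn d) : Prop :=
  MemH1T Ω u du ∧
  ∀ v dv, MemH1T Ω v dv →
    (∫ x in Ω, ∑ i, ∑ k, M x i k * du x k * dv x i)
      + (∫ x in frontier Ω, α x * u x * v x ∂(sMeasure d))
    = (∫ x in Ω, f x * v x) + ∫ x in frontier Ω, g x * v x ∂(sMeasure d)


/-- One step of the fixed-point iteration: given the previous iterate `uprev`, the next
iterate `w ∈ V` solves the linear variational problem
`∫_Ω A∇w·∇v = ⟨f,v⟩ + ∫_{Γ_N} g v - ∫_{Γ_C} B(uprev) v` for all `v ∈ V`. -/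
def IterStep {d : ℕ} (Ω ΓD ΓN ΓC : Set (Pt d)) (A : Mat d) (B : ℝ → ℝ)
    (f0 : Fn d) (F : VFn d) (g : Fn d) (uprev w : Fn d) (dw : VFn d) : Prop :=
  MemV Ω ΓD ΓN ΓC w dw ∧
  ∀ v dv, MemV Ω ΓD ΓN ΓC v dv →
    (∫ x in Ω, ∑ i, ∑ k, A x i k * dw x k * dv x i)
    = (∫ x in Ω, (f0 x * v x + ∑ i, F x i * dv x i))
      + (∫ x in ΓN, g x * v x ∂(sMeasure d))
      - ∫ x in ΓC, B (uprev x) * v x ∂(sMeasure d)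

section Stmt19Aux

open MeasureTheory

variable {α : Type*} [MeasurableSpace α] {μ : Measure α}

lemma l2_mul_int {f g : α → ℝ} (hf : MemLp f 2 μ) (hg : MemLp g 2 μ) :
    Integrable (fun x => f x * g x) μ := by
  have h : MemLp (f • g) 1 μ := hg.smul hf (hpqr := ⟨by simp [one_div, ENNReal.inv_two_add_inv_two]⟩)
  exact (memLp_one_iff_integrable.mp h).congr
    (Filter.Eventually.of_forall fun x => by simp [Pi.smul_apply, smul_eq_mul])

lemma integral_mul_le_sqrt {f g : α → ℝ} (hf : MemLp f 2 μ) (hg : MemLp g 2 μ) :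
    ∫ x, f x * g x ∂μ
      ≤ Real.sqrt (∫ x, (f x) ^ 2 ∂μ) * Real.sqrt (∫ x, (g x) ^ 2 ∂μ) := by
  have hf2 : Integrable (fun x => f x ^ 2) μ := hf.integrable_sq
  have hg2 : Integrable (fun x => g x ^ 2) μ := hg.integrable_sq
  have hfg : Integrable (fun x => f x * g x) μ := l2_mul_int hf hg
  set a := Real.sqrt (∫ x, (f x) ^ 2 ∂μ) with ha
  set b := Real.sqrt (∫ x, (g x) ^ 2 ∂μ) with hb
  have ha0 : 0 ≤ a := Real.sqrt_nonneg _
  have hb0 : 0 ≤ b := Real.sqrt_nonneg _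
  have haq : a ^ 2 = ∫ x, (f x) ^ 2 ∂μ :=
    Real.sq_sqrt (integral_nonneg fun x => sq_nonneg _)
  have hbq : b ^ 2 = ∫ x, (g x) ^ 2 ∂μ :=
    Real.sq_sqrt (integral_nonneg fun x => sq_nonneg _)
  rcases eq_or_lt_of_le ha0 with h | h
  · have hfa : ∫ x, (f x) ^ 2 ∂μ = 0 := by rw [← haq, ← h]; ring
    have hz : (fun x => (f x) ^ 2) =ᵐ[μ] 0 :=
      (integral_eq_zero_iff_of_nonneg (fun x => sq_nonneg _) hf2).mp hfa
    have hf0 : (fun x => f x * g x) =ᵐ[μ] 0 := hz.mono fun x hx => by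
      simp only [Pi.zero_apply] at hx ⊢
      have : f x = 0 := by
        have := sq_nonneg (f x); nlinarith [hx]
      simp [this]
    have hz0 : ∫ x, f x * g x ∂μ = 0 := by rw [integral_congr_ae hf0]; simp
    rw [hz0]; exact mul_nonneg ha0 hb0
  rcases eq_or_lt_of_le hb0 with h2 | h2
  · have hga : ∫ x, (g x) ^ 2 ∂μ = 0 := by rw [← hbq, ← h2]; ring
    have hz : (fun x => (g x) ^ 2) =ᵐ[μ] 0 :=
      (integral_eq_zero_iff_of_nonneg (fun x => sq_nonneg _) hg2).mp hga
    have hf0 : (fun x => f x * g x) =ᵐ[μ] 0 := hz.mono fun x hx => by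
      simp only [Pi.zero_apply] at hx ⊢
      have : g x = 0 := by nlinarith [hx]
      simp [this]
    have hz0 : ∫ x, f x * g x ∂μ = 0 := by rw [integral_congr_ae hf0]; simp
    rw [hz0]; exact mul_nonneg ha0 hb0
  · have key : 0 ≤ ∫ x, (b * f x - a * g x) ^ 2 ∂μ := integral_nonneg fun x => sq_nonneg _
    have expand : ∫ x, (b * f x - a * g x) ^ 2 ∂μ
        = b ^ 2 * (∫ x, (f x) ^ 2 ∂μ) - 2 * a * b * (∫ x, f x * g x ∂μ)
          + a ^ 2 * ∫ x, (g x) ^ 2 ∂μ := by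
      have hfun : (fun x => (b * f x - a * g x) ^ 2)
          = fun x => b ^ 2 * (f x) ^ 2 - 2 * a * b * (f x * g x) + a ^ 2 * (g x) ^ 2 :=
        funext fun x => by ring
      have hI1 : Integrable (fun x => b ^ 2 * (f x) ^ 2 - 2 * a * b * (f x * g x)) μ :=
        (hf2.const_mul _).sub (hfg.const_mul _)
      have hI2 : Integrable (fun x => a ^ 2 * (g x) ^ 2) μ := hg2.const_mul _
      have hI3 : Integrable (fun x => b ^ 2 * (f x) ^ 2) μ := hf2.const_mul _
      have hI4 : Integrable (fun x => 2 * a * b * (f x * g x)) μ := hfg.const_mul _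
      rw [hfun, integral_add hI1 hI2, integral_sub hI3 hI4, integral_const_mul,
        integral_const_mul, integral_const_mul]
    rw [expand, ← haq, ← hbq] at key
    nlinarith [mul_pos h h2]

lemma bilin_abs_le {d : ℕ} (M : Fin d → Fin d → ℝ) {κ₁ κ₂ : ℝ} (hκ₁ : 0 ≤ κ₁) (hκ₂ : 0 ≤ κ₂)
    (hsym : ∀ i j, M i j = M j i)
    (hQ : ∀ ξ : Pt d, κ₁ * ∑ i, (ξ i) ^ 2 ≤ (∑ i, ∑ j, M i j * ξ i * ξ j) ∧
      (∑ i, ∑ j, M i j * ξ i * ξ j) ≤ κ₂ * ∑ i, (ξ i) ^ 2)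
    (a b : Pt d) :
    |∑ i, ∑ k, M i k * a k * b i| ≤ κ₂ / 2 * ((∑ i, (a i) ^ 2) + ∑ i, (b i) ^ 2) := by
  have hS : (∑ i, ∑ k, M i k * a k * b i) = ∑ i, ∑ j, M i j * a i * b j := by
    rw [Finset.sum_comm]
    exact Finset.sum_congr rfl fun i _ => Finset.sum_congr rfl fun j _ => by
      rw [hsym j i]
  have hswap : (∑ i, ∑ j, M i j * b i * a j) = ∑ i, ∑ j, M i j * a i * b j := by
    rw [Finset.sum_comm]
    exact Finset.sum_congr rfl fun i _ => Finset.sum_congr rfl fun j _ => by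
      rw [hsym j i]; ring
  have key : (∑ i, ∑ j, M i j * (a i + b i) * (a j + b j))
      - (∑ i, ∑ j, M i j * (a i - b i) * (a j - b j))
      = 4 * ∑ i, ∑ j, M i j * a i * b j := by
    have expand : (∑ i, ∑ j, M i j * (a i + b i) * (a j + b j))
        - (∑ i, ∑ j, M i j * (a i - b i) * (a j - b j))
        = 2 * (∑ i, ∑ j, M i j * a i * b j) + 2 * (∑ i, ∑ j, M i j * b i * a j) := by
      rw [← Finset.sum_sub_distrib, Finset.mul_sum, Finset.mul_sum, ← Finset.sum_add_distrib]
      refine Finset.sum_congr rfl fun i _ => ?_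
      rw [← Finset.sum_sub_distrib, Finset.mul_sum, Finset.mul_sum, ← Finset.sum_add_distrib]
      exact Finset.sum_congr rfl fun j _ => by ring
    rw [expand, hswap]; ring
  have hsum1 : (∑ i, (a i + b i) ^ 2) ≤ 2 * ((∑ i, (a i) ^ 2) + ∑ i, (b i) ^ 2) := by
    calc (∑ i, (a i + b i) ^ 2) ≤ ∑ i, (2 * (a i) ^ 2 + 2 * (b i) ^ 2) :=
          Finset.sum_le_sum fun i _ => by nlinarith [sq_nonneg (a i - b i)]
      _ = 2 * ((∑ i, (a i) ^ 2) + ∑ i, (b i) ^ 2) := by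
          rw [Finset.sum_add_distrib, ← Finset.mul_sum, ← Finset.mul_sum]; ring
  have hsum2 : (∑ i, (a i - b i) ^ 2) ≤ 2 * ((∑ i, (a i) ^ 2) + ∑ i, (b i) ^ 2) := by
    calc (∑ i, (a i - b i) ^ 2) ≤ ∑ i, (2 * (a i) ^ 2 + 2 * (b i) ^ 2) :=
          Finset.sum_le_sum fun i _ => by nlinarith [sq_nonneg (a i + b i)]
      _ = 2 * ((∑ i, (a i) ^ 2) + ∑ i, (b i) ^ 2) := by
          rw [Finset.sum_add_distrib, ← Finset.mul_sum, ← Finset.mul_sum]; ring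
  have hp := hQ (fun i => a i + b i)
  have hm := hQ (fun i => a i - b i)
  have hp0 : (0:ℝ) ≤ ∑ i, ∑ j, M i j * (a i + b i) * (a j + b j) :=
    le_trans (mul_nonneg hκ₁ (Finset.sum_nonneg fun i _ => sq_nonneg _)) hp.1
  have hm0 : (0:ℝ) ≤ ∑ i, ∑ j, M i j * (a i - b i) * (a j - b j) :=
    le_trans (mul_nonneg hκ₁ (Finset.sum_nonneg fun i _ => sq_nonneg _)) hm.1
  have hub1 := mul_le_mul_of_nonneg_left hsum1 hκ₂
  have hub2 := mul_le_mul_of_nonneg_left hsum2 hκ₂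
  rw [hS]
  rw [abs_le]
  constructor
  · nlinarith [hp.2, hm.2]
  · nlinarith [hp.2, hm.2]

lemma memLp_comp_lip [IsFiniteMeasure μ] {u : α → ℝ} (hu : MemLp u 2 μ)
    (B : ℝ → ℝ) (LB : ℝ) (hLB : 0 ≤ LB) (hBlip : ∀ x y, |B x - B y| ≤ LB * |x - y|) :
    MemLp (fun x => B (u x)) 2 μ := by
  have hBc : Continuous B := by
    have hlip : LipschitzWith LB.toNNReal B := LipschitzWith.of_dist_le_mul fun x y => by
      rw [Real.dist_eq, Real.dist_eq, Real.coe_toNNReal LB hLB]; exact hBlip x y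
    exact hlip.continuous
  have hmeas : AEStronglyMeasurable (fun x => B (u x)) μ := hBc.comp_aestronglyMeasurable hu.1
  have hg : MemLp (fun x => |B 0| + LB * ‖u x‖) 2 μ :=
    (memLp_const (|B 0|)).add (hu.norm.const_mul LB)
  refine hg.of_le hmeas (Filter.Eventually.of_forall fun x => ?_)
  have h2 := hBlip (u x) 0
  rw [sub_zero] at h2
  have h3 := abs_sub_abs_le_abs_sub (B (u x)) (B 0)
  simp only [Real.norm_eq_abs]
  have h4 : |B 0| + LB * |u x| ≤ |(|B 0| + LB * |u x|)| := le_abs_self _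
  linarith

end Stmt19Aux

section Stmt19Main

open MeasureTheory

lemma MemV.sub_mem {d : ℕ} {Ω ΓD ΓN ΓC : Set (Pt d)}
    (hΩb : Bornology.IsBounded Ω) {u : Fn d} {du : VFn d} {v : Fn d} {dv : VFn d}
    (hu : MemV Ω ΓD ΓN ΓC u du) (hv : MemV Ω ΓD ΓN ΓC v dv) :
    MemV Ω ΓD ΓN ΓC (fun x => u x - v x) (fun x i => du x i - dv x i) := by
  haveI : IsFiniteMeasure (volume.restrict Ω) :=
    ⟨by rw [Measure.restrict_apply_univ]; exact hΩb.measure_lt_top⟩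
  have hui : Integrable u (volume.restrict Ω) := hu.h1.1.integrable one_le_two
  have hvi : Integrable v (volume.restrict Ω) := hv.h1.1.integrable one_le_two
  refine ⟨⟨hu.h1.1.sub hv.h1.1, fun i => (hu.h1.2.1 i).sub (hv.h1.2.1 i), ?_⟩, ?_, ?_, ?_, ?_⟩
  · -- weak gradient of the difference
    intro φ hφ hφc hφs i
    have hDc : Continuous fun x => fderiv ℝ φ x (Pi.single i 1) :=
      (hφ.continuous_fderiv (by simp)).clm_apply continuous_const
    have hDb : ∃ C, ∀ x, ‖fderiv ℝ φ x (Pi.single i 1)‖ ≤ C :=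
      (hφc.fderiv_apply ℝ (Pi.single i 1)).exists_bound_of_continuous hDc
    have hφb : ∃ C, ∀ x, ‖φ x‖ ≤ C := hφc.exists_bound_of_continuous hφ.continuous
    have hint1 : Integrable (fun x => u x * fderiv ℝ φ x (Pi.single i 1)) (volume.restrict Ω) :=
      (hui.bdd_mul hDc.aestronglyMeasurable (Filter.Eventually.of_forall hDb.choose_spec)).congr
        (Filter.Eventually.of_forall fun x => mul_comm _ _)
    have hint2 : Integrable (fun x => v x * fderiv ℝ φ x (Pi.single i 1)) (volume.restrict Ω) :=
      (hvi.bdd_mul hDc.aestronglyMeasurable (Filter.Eventually.of_forall hDb.choose_spec)).congr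
        (Filter.Eventually.of_forall fun x => mul_comm _ _)
    have hint3 : Integrable (fun x => du x i * φ x) (volume.restrict Ω) :=
      (((hu.h1.2.1 i).integrable one_le_two).bdd_mul hφ.continuous.aestronglyMeasurable
        (Filter.Eventually.of_forall hφb.choose_spec)).congr (Filter.Eventually.of_forall fun x => mul_comm _ _)
    have hint4 : Integrable (fun x => dv x i * φ x) (volume.restrict Ω) :=
      (((hv.h1.2.1 i).integrable one_le_two).bdd_mul hφ.continuous.aestronglyMeasurable
        (Filter.Eventually.of_forall hφb.choose_spec)).congr (Filter.Eventually.of_forall fun x => mul_comm _ _)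
    have h1 := hu.h1.2.2 φ hφ hφc hφs i
    have h2 := hv.h1.2.2 φ hφ hφc hφs i
    have hL : ∫ x in Ω, (u x - v x) * fderiv ℝ φ x (Pi.single i 1)
        = (∫ x in Ω, u x * fderiv ℝ φ x (Pi.single i 1))
          - ∫ x in Ω, v x * fderiv ℝ φ x (Pi.single i 1) := by
      rw [← integral_sub hint1 hint2]
      exact integral_congr_ae (Filter.Eventually.of_forall fun x => by ring)
    have hR : ∫ x in Ω, (du x i - dv x i) * φ x
        = (∫ x in Ω, du x i * φ x) - ∫ x in Ω, dv x i * φ x := by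
      rw [← integral_sub hint3 hint4]
      exact integral_congr_ae (Filter.Eventually.of_forall fun x => by ring)
    show ∫ x in Ω, (u x - v x) * fderiv ℝ φ x (Pi.single i 1)
        = - ∫ x in Ω, (du x i - dv x i) * φ x
    rw [hL, hR, h1, h2]; ring
  · -- trace representative
    filter_upwards [hu.tr, hv.tr] with x hx1 hx2
    have havg : ∀ r : ℝ, (⨍ y in Metric.ball x r ∩ Ω, (u y - v y))
        = (⨍ y in Metric.ball x r ∩ Ω, u y) - ⨍ y in Metric.ball x r ∩ Ω, v y := by
      intro r
      have hle : volume.restrict (Metric.ball x r ∩ Ω) ≤ volume.restrict Ω :=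
        Measure.restrict_mono Set.inter_subset_right le_rfl
      rw [setAverage_eq, setAverage_eq, setAverage_eq, ← smul_sub,
        ← integral_sub (hui.mono_measure hle) (hvi.mono_measure hle)]
    exact Filter.Tendsto.congr (fun r => (havg r).symm) (hx1.sub hx2)
  · filter_upwards [hu.zeroD, hv.zeroD] with x h1 h2
    simp only [h1, h2, sub_zero]
  · exact hu.memN.sub hv.memN
  · exact hu.memC.sub hv.memC

lemma bilin_integrable {d : ℕ} {Ω : Set (Pt d)} {A : Mat d} {κ₁ κ₂ : ℝ}
    (hκ₁ : 0 ≤ κ₁) (hκ : κ₁ ≤ κ₂) (hA : IsElliptic A κ₁ κ₂)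
    {a b : VFn d} (ha : ∀ i, MemLp (fun x => a x i) 2 (volume.restrict Ω))
    (hb : ∀ i, MemLp (fun x => b x i) 2 (volume.restrict Ω)) :
    Integrable (fun x => ∑ i, ∑ k, A x i k * a x k * b x i) (volume.restrict Ω) := by
  have hκ₂ : (0:ℝ) ≤ κ₂ := le_trans hκ₁ hκ
  have hmeas : AEStronglyMeasurable (fun x => ∑ i, ∑ k, A x i k * a x k * b x i)
      (volume.restrict Ω) := by
    refine Finset.aestronglyMeasurable_fun_sum _ fun i _ => ?_
    refine Finset.aestronglyMeasurable_fun_sum _ fun k _ => ?_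
    exact ((hA.1 i k).aestronglyMeasurable.mul (ha k).1).mul (hb i).1
  have hgint : Integrable
      (fun x => κ₂ / 2 * ((∑ i, (a x i) ^ 2) + ∑ i, (b x i) ^ 2)) (volume.restrict Ω) := by
    refine Integrable.const_mul ?_ _
    exact (integrable_finset_sum _ fun i _ => (ha i).integrable_sq).add
      (integrable_finset_sum _ fun i _ => (hb i).integrable_sq)
  refine hgint.mono' hmeas ?_
  filter_upwards [ae_restrict_of_ae hA.2] with x hx
  rw [Real.norm_eq_abs]
  exact bilin_abs_le (A x) hκ₁ hκ₂ hx.1 hx.2 (fun k => a x k) (fun i => b x i)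

lemma stmt19_contraction {d : ℕ} {Ω ΓD ΓN ΓC : Set (Pt d)}
    (hΩb : Bornology.IsBounded Ω)
    (hbd : BoundaryDecomp Ω ΓD ΓN ΓC) (hfin : sMeasure d (frontier Ω) ≠ ⊤)
    {κ₁ κ₂ : ℝ} (hκ₁ : 0 < κ₁) (hκ : κ₁ ≤ κ₂)
    {A : Mat d} (hA : IsElliptic A κ₁ κ₂)
    {B : ℝ → ℝ} {LB : ℝ} (hLB : 0 ≤ LB)
    (hBlip : ∀ x y : ℝ, |B x - B y| ≤ LB * |x - y|)
    {cj : ℝ} (hcjpos : 0 ≤ cj)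
    (hcj : ∀ u du, MemV Ω ΓD ΓN ΓC u du →
      L2NormOn ΓC (sMeasure d) u ≤ cj * GradL2NormOn Ω du)
    {f0 : Fn d} {F : VFn d} {g : Fn d}
    {u1 : Fn d} {du1 : VFn d} {u2 : Fn d} {du2 : VFn d}
    {w1 : Fn d} {dw1 : VFn d} {w2 : Fn d} {dw2 : VFn d}
    (hu1 : MemV Ω ΓD ΓN ΓC u1 du1) (hu2 : MemV Ω ΓD ΓN ΓC u2 du2)
    (h1 : IterStep Ω ΓD ΓN ΓC A B f0 F g u1 w1 dw1)
    (h2 : IterStep Ω ΓD ΓN ΓC A B f0 F g u2 w2 dw2) :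
    GradL2NormOn Ω (fun x i => dw1 x i - dw2 x i)
      ≤ (LB * cj ^ 2 / κ₁) * GradL2NormOn Ω (fun x i => du1 x i - du2 x i) := by
  classical
  have hVe : MemV Ω ΓD ΓN ΓC (fun x => w1 x - w2 x) (fun x i => dw1 x i - dw2 x i) :=
    MemV.sub_mem hΩb h1.1 h2.1
  have hVδ : MemV Ω ΓD ΓN ΓC (fun x => u1 x - u2 x) (fun x i => du1 x i - du2 x i) :=
    MemV.sub_mem hΩb hu1 hu2
  have hΓCsub : ΓC ⊆ frontier Ω := by
    obtain ⟨U, _, h⟩ := hbd.hC; rw [h]; exact Set.inter_subset_right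
  haveI : IsFiniteMeasure ((sMeasure d).restrict ΓC) :=
    ⟨by rw [Measure.restrict_apply_univ]
        exact lt_of_le_of_lt (measure_mono hΓCsub) hfin.lt_top⟩
  have heC : MemLp (fun x => w1 x - w2 x) 2 ((sMeasure d).restrict ΓC) := hVe.memC
  have hB1 : MemLp (fun x => B (u1 x)) 2 ((sMeasure d).restrict ΓC) :=
    memLp_comp_lip hu1.memC B LB hLB hBlip
  have hB2 : MemLp (fun x => B (u2 x)) 2 ((sMeasure d).restrict ΓC) :=
    memLp_comp_lip hu2.memC B LB hLB hBlip
  have hdw1 := h1.1.h1.2.1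
  have hdw2 := h2.1.h1.2.1
  have hde2 : ∀ i, MemLp (fun x => dw1 x i - dw2 x i) 2 (volume.restrict Ω) :=
    fun i => (hdw1 i).sub (hdw2 i)
  -- Step 1: ellipticity
  have hPe_int : Integrable
      (fun x => ∑ i, ∑ k, A x i k * (dw1 x k - dw2 x k) * (dw1 x i - dw2 x i))
      (volume.restrict Ω) := bilin_integrable hκ₁.le hκ hA hde2 hde2
  have hsq_int : Integrable (fun x => ∑ i, (dw1 x i - dw2 x i) ^ 2) (volume.restrict Ω) :=
    integrable_finset_sum _ fun i _ => (hde2 i).integrable_sq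
  have hell : κ₁ * ∫ x in Ω, ∑ i, (dw1 x i - dw2 x i) ^ 2
      ≤ ∫ x in Ω, ∑ i, ∑ k, A x i k * (dw1 x k - dw2 x k) * (dw1 x i - dw2 x i) := by
    rw [← integral_const_mul]
    refine integral_mono_ae (hsq_int.const_mul _) hPe_int ?_
    filter_upwards [ae_restrict_of_ae hA.2] with x hx
    refine le_trans (hx.2 (fun i => dw1 x i - dw2 x i)).1 (le_of_eq ?_)
    exact Finset.sum_congr rfl fun i _ => Finset.sum_congr rfl fun j _ => by ring
  -- Step 2: split the bilinear form
  have hP1_int := bilin_integrable hκ₁.le hκ hA hdw1 hde2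
  have hP2_int := bilin_integrable hκ₁.le hκ hA hdw2 hde2
  have hsplit : ∫ x in Ω, ∑ i, ∑ k, A x i k * (dw1 x k - dw2 x k) * (dw1 x i - dw2 x i)
      = (∫ x in Ω, ∑ i, ∑ k, A x i k * dw1 x k * (dw1 x i - dw2 x i))
        - ∫ x in Ω, ∑ i, ∑ k, A x i k * dw2 x k * (dw1 x i - dw2 x i) := by
    rw [← integral_sub hP1_int hP2_int]
    refine integral_congr_ae (Filter.Eventually.of_forall fun x => ?_)
    beta_reduce
    rw [← Finset.sum_sub_distrib]
    refine Finset.sum_congr rfl fun i _ => ?_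
    rw [← Finset.sum_sub_distrib]
    exact Finset.sum_congr rfl fun k _ => by ring
  -- Step 3: use the variational equations
  have E1 := h1.2 (fun x => w1 x - w2 x) (fun x i => dw1 x i - dw2 x i) hVe
  have E2 := h2.2 (fun x => w1 x - w2 x) (fun x i => dw1 x i - dw2 x i) hVe
  beta_reduce at E1 E2
  have hbd_int1 : Integrable (fun x => B (u1 x) * (w1 x - w2 x))
      ((sMeasure d).restrict ΓC) := l2_mul_int hB1 heC
  have hbd_int2 : Integrable (fun x => B (u2 x) * (w1 x - w2 x))
      ((sMeasure d).restrict ΓC) := l2_mul_int hB2 heC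
  have hCdiff : ∫ x in ΓC, (B (u2 x) - B (u1 x)) * (w1 x - w2 x) ∂(sMeasure d)
      = (∫ x in ΓC, B (u2 x) * (w1 x - w2 x) ∂(sMeasure d))
        - ∫ x in ΓC, B (u1 x) * (w1 x - w2 x) ∂(sMeasure d) := by
    rw [← integral_sub hbd_int2 hbd_int1]
    exact integral_congr_ae (Filter.Eventually.of_forall fun x => by ring)
  -- Step 4: pointwise bound on the contact term
  have hδC : MemLp (fun x => u1 x - u2 x) 2 ((sMeasure d).restrict ΓC) :=
    hu1.memC.sub hu2.memC
  have habs : MemLp (fun x => LB * ‖u1 x - u2 x‖) 2 ((sMeasure d).restrict ΓC) :=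
    hδC.norm.const_mul LB
  have heabs : MemLp (fun x => ‖w1 x - w2 x‖) 2 ((sMeasure d).restrict ΓC) := heC.norm
  have hbound : ∫ x in ΓC, (B (u2 x) - B (u1 x)) * (w1 x - w2 x) ∂(sMeasure d)
      ≤ ∫ x in ΓC, (LB * ‖u1 x - u2 x‖) * ‖w1 x - w2 x‖ ∂(sMeasure d) := by
    refine integral_mono_ae
      ((hbd_int2.sub hbd_int1).congr (Filter.Eventually.of_forall fun x => by
        simp only [Pi.sub_apply]; ring))
      (l2_mul_int habs heabs) (Filter.Eventually.of_forall fun x => ?_)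
    have h1x : (B (u2 x) - B (u1 x)) * (w1 x - w2 x)
        ≤ |B (u2 x) - B (u1 x)| * |w1 x - w2 x| := by
      calc (B (u2 x) - B (u1 x)) * (w1 x - w2 x)
          ≤ |(B (u2 x) - B (u1 x)) * (w1 x - w2 x)| := le_abs_self _
        _ = |B (u2 x) - B (u1 x)| * |w1 x - w2 x| := abs_mul _ _
    have h2x : |B (u2 x) - B (u1 x)| ≤ LB * |u1 x - u2 x| := by
      have h := hBlip (u2 x) (u1 x)
      rw [abs_sub_comm (u2 x) (u1 x)] at h
      exact h
    simp only [Real.norm_eq_abs]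
    calc (B (u2 x) - B (u1 x)) * (w1 x - w2 x)
        ≤ |B (u2 x) - B (u1 x)| * |w1 x - w2 x| := h1x
      _ ≤ (LB * |u1 x - u2 x|) * |w1 x - w2 x| :=
          mul_le_mul_of_nonneg_right h2x (abs_nonneg _)
  -- Step 5: Cauchy-Schwarz
  have hCS : ∫ x in ΓC, (LB * ‖u1 x - u2 x‖) * ‖w1 x - w2 x‖ ∂(sMeasure d)
      ≤ Real.sqrt (∫ x in ΓC, (LB * ‖u1 x - u2 x‖) ^ 2 ∂(sMeasure d))
        * Real.sqrt (∫ x in ΓC, ‖w1 x - w2 x‖ ^ 2 ∂(sMeasure d)) :=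
    integral_mul_le_sqrt habs heabs
  have hid1 : Real.sqrt (∫ x in ΓC, (LB * ‖u1 x - u2 x‖) ^ 2 ∂(sMeasure d))
      = LB * L2NormOn ΓC (sMeasure d) (fun x => u1 x - u2 x) := by
    have he : ∫ x in ΓC, (LB * ‖u1 x - u2 x‖) ^ 2 ∂(sMeasure d)
        = LB ^ 2 * ∫ x in ΓC, (u1 x - u2 x) ^ 2 ∂(sMeasure d) := by
      rw [← integral_const_mul]
      exact integral_congr_ae (Filter.Eventually.of_forall fun x => by
        beta_reduce; rw [mul_pow, Real.norm_eq_abs, sq_abs])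
    simp only [L2NormOn]
    rw [he, Real.sqrt_mul (sq_nonneg LB), Real.sqrt_sq hLB]
  have hid2 : Real.sqrt (∫ x in ΓC, ‖w1 x - w2 x‖ ^ 2 ∂(sMeasure d))
      = L2NormOn ΓC (sMeasure d) (fun x => w1 x - w2 x) := by
    simp only [L2NormOn]
    congr 1
    exact integral_congr_ae (Filter.Eventually.of_forall fun x => by
      beta_reduce; rw [Real.norm_eq_abs, sq_abs])
  -- Step 6: trace inequalities
  have ht1 : L2NormOn ΓC (sMeasure d) (fun x => u1 x - u2 x)
      ≤ cj * GradL2NormOn Ω (fun x i => du1 x i - du2 x i) := hcj _ _ hVδ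
  have ht2 : L2NormOn ΓC (sMeasure d) (fun x => w1 x - w2 x)
      ≤ cj * GradL2NormOn Ω (fun x i => dw1 x i - dw2 x i) := hcj _ _ hVe
  -- Step 7: assemble
  set X := GradL2NormOn Ω (fun x i => dw1 x i - dw2 x i) with hXdef
  set Y := GradL2NormOn Ω (fun x i => du1 x i - du2 x i) with hYdef
  have hX0 : 0 ≤ X := Real.sqrt_nonneg _
  have hY0 : 0 ≤ Y := Real.sqrt_nonneg _
  have hXsq : X ^ 2 = ∫ x in Ω, ∑ i, (dw1 x i - dw2 x i) ^ 2 := by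
    rw [hXdef]; simp only [GradL2NormOn]
    exact Real.sq_sqrt (integral_nonneg fun x => Finset.sum_nonneg fun i _ => sq_nonneg _)
  have hL0 : 0 ≤ L2NormOn ΓC (sMeasure d) (fun x => u1 x - u2 x) := Real.sqrt_nonneg _
  have hL0' : 0 ≤ L2NormOn ΓC (sMeasure d) (fun x => w1 x - w2 x) := Real.sqrt_nonneg _
  have hA1 : L2NormOn ΓC (sMeasure d) (fun x => u1 x - u2 x)
      * L2NormOn ΓC (sMeasure d) (fun x => w1 x - w2 x) ≤ (cj * Y) * (cj * X) :=
    mul_le_mul ht1 ht2 hL0' (mul_nonneg hcjpos hY0)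
  have main : κ₁ * X ^ 2 ≤ LB * cj ^ 2 * Y * X := by
    rw [hXsq]
    calc κ₁ * ∫ x in Ω, ∑ i, (dw1 x i - dw2 x i) ^ 2
        ≤ ∫ x in Ω, ∑ i, ∑ k, A x i k * (dw1 x k - dw2 x k) * (dw1 x i - dw2 x i) := hell
      _ = (∫ x in Ω, ∑ i, ∑ k, A x i k * dw1 x k * (dw1 x i - dw2 x i))
          - ∫ x in Ω, ∑ i, ∑ k, A x i k * dw2 x k * (dw1 x i - dw2 x i) := hsplit
      _ = ∫ x in ΓC, (B (u2 x) - B (u1 x)) * (w1 x - w2 x) ∂(sMeasure d) := by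
          rw [E1, E2, hCdiff]; ring
      _ ≤ ∫ x in ΓC, (LB * ‖u1 x - u2 x‖) * ‖w1 x - w2 x‖ ∂(sMeasure d) := hbound
      _ ≤ Real.sqrt (∫ x in ΓC, (LB * ‖u1 x - u2 x‖) ^ 2 ∂(sMeasure d))
          * Real.sqrt (∫ x in ΓC, ‖w1 x - w2 x‖ ^ 2 ∂(sMeasure d)) := hCS
      _ = LB * (L2NormOn ΓC (sMeasure d) (fun x => u1 x - u2 x)
          * L2NormOn ΓC (sMeasure d) (fun x => w1 x - w2 x)) := by
          rw [hid1, hid2]; ring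
      _ ≤ LB * ((cj * Y) * (cj * X)) := mul_le_mul_of_nonneg_left hA1 hLB
      _ = LB * cj ^ 2 * Y * X := by ring
  rcases hX0.eq_or_lt with hX | hX
  · rw [← hX]
    exact mul_nonneg (div_nonneg (mul_nonneg hLB (sq_nonneg cj)) hκ₁.le) hY0
  · have h' : κ₁ * X ≤ LB * cj ^ 2 * Y :=
      le_of_mul_le_mul_right (by nlinarith [main]) hX
    rw [div_mul_eq_mul_div, le_div_iff₀ hκ₁]
    linarith

end Stmt19Main


/-- for `B` uniformly Lipschitz with constant `L_B`, `A` satisfying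
Assumption A and `κ₁ - L_B c_j² > 0`, the iteration map `u⁽ⁿ⁾ ↦ u⁽ⁿ⁺¹⁾` is a contraction
on `V` (with some ratio `q < 1` in the `V`-norm `‖∇·‖_{L²(Ω)}`), and any sequence of
iterates converges linearly, at the geometric rate `q`, to the solution `u` of the
variational problem `∫_Ω A∇u·∇v + ∫_{Γ_C} B(u)v = ⟨f,v⟩ + ∫_{Γ_N} g v` for all `v ∈ V`. -/
theorem stmt_19 {d : ℕ}
    (Ω ΓD ΓN ΓC : Set (Pt d))
    (hΩo : IsOpen Ω) (hΩb : Bornology.IsBounded Ω) (hΩne : Ω.Nonempty)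
    (hLip : HasLipschitzBoundary Ω) (hbd : BoundaryDecomp Ω ΓD ΓN ΓC)
    (hfin : sMeasure d (frontier Ω) ≠ ⊤)
    (κ₁ κ₂ : ℝ) (hκ₁ : 0 < κ₁) (hκ : κ₁ ≤ κ₂)
    (A : Mat d) (hA : IsElliptic A κ₁ κ₂)
    (B : ℝ → ℝ) (LB : ℝ) (hLB : 0 ≤ LB)
    (hBlip : ∀ x y : ℝ, |B x - B y| ≤ LB * |x - y|)
    (cj : ℝ) (hcjpos : 0 ≤ cj)
    (hcj : ∀ u du, MemV Ω ΓD ΓN ΓC u du →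
      L2NormOn ΓC (sMeasure d) u ≤ cj * GradL2NormOn Ω du)
    (hsmall : 0 < κ₁ - LB * cj ^ 2)
    (f0 : Fn d) (F : VFn d) (g : Fn d)
    (hf0 : MemLp f0 2 (volume.restrict Ω))
    (hF : ∀ i, MemLp (fun x => F x i) 2 (volume.restrict Ω))
    (hg : MemLp g 2 ((sMeasure d).restrict ΓN)) :
    ∃ q : ℝ, 0 ≤ q ∧ q < 1 ∧
      (∀ u1 du1 u2 du2 w1 dw1 w2 dw2,
        MemV Ω ΓD ΓN ΓC u1 du1 → MemV Ω ΓD ΓN ΓC u2 du2 →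
        IterStep Ω ΓD ΓN ΓC A B f0 F g u1 w1 dw1 →
        IterStep Ω ΓD ΓN ΓC A B f0 F g u2 w2 dw2 →
        GradL2NormOn Ω (fun x i => dw1 x i - dw2 x i)
          ≤ q * GradL2NormOn Ω (fun x i => du1 x i - du2 x i)) ∧
      (∀ (us : ℕ → Fn d) (dus : ℕ → VFn d),
        (∀ n, MemV Ω ΓD ΓN ΓC (us n) (dus n)) →
        (∀ n, IterStep Ω ΓD ΓN ΓC A B f0 F g (us n) (us (n+1)) (dus (n+1))) →
        ∀ u du, MemV Ω ΓD ΓN ΓC u du →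
          (∀ v dv, MemV Ω ΓD ΓN ΓC v dv →
            (∫ x in Ω, ∑ i, ∑ k, A x i k * du x k * dv x i)
              + (∫ x in ΓC, B (u x) * v x ∂(sMeasure d))
            = (∫ x in Ω, (f0 x * v x + ∑ i, F x i * dv x i))
              + ∫ x in ΓN, g x * v x ∂(sMeasure d)) →
          ∀ n : ℕ, GradL2NormOn Ω (fun x i => dus n x i - du x i)
            ≤ q ^ n * GradL2NormOn Ω (fun x i => dus 0 x i - du x i)) := by
  have hq0 : 0 ≤ LB * cj ^ 2 / κ₁ := div_nonneg (mul_nonneg hLB (sq_nonneg cj)) hκ₁.le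
  refine ⟨LB * cj ^ 2 / κ₁, hq0, by rw [div_lt_one hκ₁]; linarith, ?_, ?_⟩
  · intro u1 du1 u2 du2 w1 dw1 w2 dw2 hu1 hu2 h1 h2
    exact stmt19_contraction hΩb hbd hfin hκ₁ hκ hA hLB hBlip hcjpos hcj hu1 hu2 h1 h2
  · intro us dus hVs hIter u du hVu hEq n
    have hFix : IterStep Ω ΓD ΓN ΓC A B f0 F g u u du := by
      refine ⟨hVu, fun v dv hv => ?_⟩
      have h := hEq v dv hv
      linarith
    induction n with
    | zero => simp
    | succ n ih =>
      calc GradL2NormOn Ω (fun x i => dus (n + 1) x i - du x i)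
          ≤ (LB * cj ^ 2 / κ₁) * GradL2NormOn Ω (fun x i => dus n x i - du x i) :=
            stmt19_contraction hΩb hbd hfin hκ₁ hκ hA hLB hBlip hcjpos hcj
              (hVs n) hVu (hIter n) hFix
        _ ≤ (LB * cj ^ 2 / κ₁) * ((LB * cj ^ 2 / κ₁) ^ n
            * GradL2NormOn Ω (fun x i => dus 0 x i - du x i)) :=
            mul_le_mul_of_nonneg_left ih hq0
        _ = (LB * cj ^ 2 / κ₁) ^ (n + 1)
            * GradL2NormOn Ω (fun x i => dus 0 x i - du x i) := by ring
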